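/- arXiv:2109.10999 — 7 statements merged into one kernel-verified Lean document; each statement's English description precedes it below -/
import Mathlib

section
/- Let τ > 0 and suppose u, v ∈ X and φ ∈ M satisfy the velocity update u = v - τ (D φ - G φ). Assume in addition that there are a linear subspace M₀ ⊆ M and an element χ ∈ M with D χ = 0, G χ = 0, and j(q, χ) = 0 for all q ∈ M, such that every q ∈ M can be written q = q₀ + c χ with q₀ ∈ M₀ and c ∈ ℝ, and that the projection step holds on M₀: τ a_ellip(φ, q₀) = -b(v, q₀) for all q₀ ∈ M₀. Then for every q ∈ M: b(u, q) = -τ j(φ, q) + τ ⟪G φ, G q⟫. (Abstract form of the second identity of Lemma 4.1 of the paper, including the extension from mean-zero test functions to all of M.) -/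
open scoped RealInnerProductSpace

/-- Abstract form of the second identity of Lemma 4.1, including the extension
from mean-zero test functions to all of `M`. -/
theorem stmt_2
    {X M : Type*}
    [NormedAddCommGroup X] [InnerProductSpace ℝ X] [FiniteDimensional ℝ X]
    [NormedAddCommGroup M] [InnerProductSpace ℝ M] [FiniteDimensional ℝ M]
    (D G : M →ₗ[ℝ] X) (j : M →ₗ[ℝ] M →ₗ[ℝ] ℝ)
    (hj_symm : ∀ p q : M, j p q = j q p)
    (hj_psd : ∀ q : M, 0 ≤ j q q)
    (b : X → M → ℝ)
    (hb : ∀ (θ : X) (q : M), b θ q = -⟪D q, θ⟫ + ⟪G q, θ⟫)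
    (aellip : M → M → ℝ)
    (haellip : ∀ φ q : M,
      aellip φ q = ⟪D φ, D q⟫ - ⟪D φ, G q⟫ - ⟪G φ, D q⟫ + j φ q)
    (τ : ℝ) (hτ : 0 < τ)
    (u v : X) (φ : M)
    (hu : u = v - τ • (D φ - G φ))
    (M₀ : Submodule ℝ M) (χ : M)
    (hχD : D χ = 0) (hχG : G χ = 0)
    (hχj : ∀ q : M, j q χ = 0)
    (hdecomp : ∀ q : M, ∃ q₀ ∈ M₀, ∃ c : ℝ, q = q₀ + c • χ)
    (hproj : ∀ q₀ ∈ M₀, τ * aellip φ q₀ = -b v q₀) :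
    ∀ q : M, b u q = -τ * j φ q + τ * ⟪G φ, G q⟫ := by
  intro q
  obtain ⟨q₀, hq₀, c, rfl⟩ := hdecomp q
  have hpq := hproj q₀ hq₀
  rw [haellip, hb] at hpq
  simp only [hb, hu, map_add, map_smul, hχD, hχG, smul_zero, add_zero,
    inner_sub_left, inner_sub_right, inner_smul_left, inner_smul_right,
    hχj, RCLike.ofReal_real_eq_id, id_eq]
  have h1 : ⟪D q₀, D φ⟫ = ⟪D φ, D q₀⟫ := real_inner_comm _ _
  have h2 : ⟪D q₀, G φ⟫ = ⟪G φ, D q₀⟫ := real_inner_comm _ _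
  have h3 : ⟪G q₀, D φ⟫ = ⟪D φ, G q₀⟫ := real_inner_comm _ _
  have h4 : ⟪G q₀, G φ⟫ = ⟪G φ, G q₀⟫ := real_inner_comm _ _
  linear_combination hpq + τ * h1 - τ * h2 - τ * h3 + τ * h4
end

section
/- Let τ > 0 and suppose u, v ∈ X and φ ∈ M satisfy u = v - τ (D φ - G φ) and b(u, q) = -τ j(φ, q) + τ ⟪G φ, G q⟫ for all q ∈ M. Then the energy identity (1/2)‖u‖² - (1/2)‖v‖² + (τ²/2) a_ellip(φ, φ) + (τ²/2) j(φ, φ) = (τ²/2) ‖G φ‖² holds. (Abstract form of the key identity used in the proofs of Theorem 5.1 and Theorem 6.5 of the paper.) -/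
open scoped RealInnerProductSpace

/-- Abstract form of the key energy identity used in Theorems 5.1 and 6.5. -/
theorem stmt_3
    {X M : Type*}
    [NormedAddCommGroup X] [InnerProductSpace ℝ X] [FiniteDimensional ℝ X]
    [NormedAddCommGroup M] [InnerProductSpace ℝ M] [FiniteDimensional ℝ M]
    (D G : M →ₗ[ℝ] X) (j : M →ₗ[ℝ] M →ₗ[ℝ] ℝ)
    (hj_symm : ∀ p q : M, j p q = j q p)
    (hj_psd : ∀ q : M, 0 ≤ j q q)
    (b : X → M → ℝ)
    (hb : ∀ (θ : X) (q : M), b θ q = -⟪D q, θ⟫ + ⟪G q, θ⟫)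
    (aellip : M → M → ℝ)
    (haellip : ∀ φ q : M,
      aellip φ q = ⟪D φ, D q⟫ - ⟪D φ, G q⟫ - ⟪G φ, D q⟫ + j φ q)
    (τ : ℝ) (hτ : 0 < τ)
    (u v : X) (φ : M)
    (hu : u = v - τ • (D φ - G φ))
    (hbu : ∀ q : M, b u q = -τ * j φ q + τ * ⟪G φ, G q⟫) :
    (1/2) * ‖u‖^2 - (1/2) * ‖v‖^2 + (τ^2/2) * aellip φ φ + (τ^2/2) * j φ φ
      = (τ^2/2) * ‖G φ‖^2 := by
  have key := hbu φ
  rw [hb] at key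
  have hv : v = u + τ • (D φ - G φ) := by rw [hu]; abel
  have hnv : ‖v‖^2 = ‖u‖^2 + 2 * τ * ⟪u, D φ - G φ⟫ + τ^2 * ‖D φ - G φ‖^2 := by
    rw [hv, ← real_inner_self_eq_norm_sq, ← real_inner_self_eq_norm_sq,
      ← real_inner_self_eq_norm_sq]
    simp only [inner_add_add_self, real_inner_smul_left, real_inner_smul_right,
      real_inner_comm (D φ - G φ) u]
    ring
  have hDG : ‖D φ - G φ‖^2 = ‖D φ‖^2 - 2 * ⟪D φ, G φ⟫ + ‖G φ‖^2 := by
    rw [← real_inner_self_eq_norm_sq, ← real_inner_self_eq_norm_sq,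
      ← real_inner_self_eq_norm_sq, inner_sub_sub_self]
    rw [real_inner_comm (G φ) (D φ)]; ring
  have hinner : ⟪u, D φ - G φ⟫ = τ * j φ φ - τ * ‖G φ‖^2 := by
    rw [inner_sub_right, ← real_inner_comm u (D φ), ← real_inner_comm u (G φ),
      ← real_inner_self_eq_norm_sq]
    linarith [key]
  rw [haellip, hnv, hDG, hinner, real_inner_self_eq_norm_sq,
    real_inner_comm (G φ) (D φ)]
  ring
end

section
/- Let τ > 0 and suppose u, v ∈ X and φ ∈ M satisfy u = v - τ (D φ - G φ) and b(u, q) = -τ j(φ, q) + τ ⟪G φ, G q⟫ for all q ∈ M. Assume the penalty condition ‖G q‖² ≤ j(q, q) for all q ∈ M (abstract form of the assumption σ̃ ≥ M̃²_{k₁} on the penalty parameter). Then ‖u‖² + τ² a_ellip(φ, φ) ≤ ‖v‖². (Abstract form of the unconditional one-step damping inequality in the proof of Theorem 5.1.) -/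
open scoped RealInnerProductSpace

/-- Abstract form of the unconditional one-step damping inequality in the proof
of Theorem 5.1. -/
theorem stmt_4
    {X M : Type*}
    [NormedAddCommGroup X] [InnerProductSpace ℝ X] [FiniteDimensional ℝ X]
    [NormedAddCommGroup M] [InnerProductSpace ℝ M] [FiniteDimensional ℝ M]
    (D G : M →ₗ[ℝ] X) (j : M →ₗ[ℝ] M →ₗ[ℝ] ℝ)
    (hj_symm : ∀ p q : M, j p q = j q p)
    (hj_psd : ∀ q : M, 0 ≤ j q q)
    (b : X → M → ℝ)
    (hb : ∀ (θ : X) (q : M), b θ q = -⟪D q, θ⟫ + ⟪G q, θ⟫)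
    (aellip : M → M → ℝ)
    (haellip : ∀ φ q : M,
      aellip φ q = ⟪D φ, D q⟫ - ⟪D φ, G q⟫ - ⟪G φ, D q⟫ + j φ q)
    (τ : ℝ) (hτ : 0 < τ)
    (u v : X) (φ : M)
    (hu : u = v - τ • (D φ - G φ))
    (hbu : ∀ q : M, b u q = -τ * j φ q + τ * ⟪G φ, G q⟫)
    (hpen : ∀ q : M, ‖G q‖^2 ≤ j q q) :
    ‖u‖^2 + τ^2 * aellip φ φ ≤ ‖v‖^2 := by
  have hv : v = u + τ • (D φ - G φ) := by rw [hu]; abel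
  have key := hbu φ
  rw [hb] at key
  have hg := hpen φ
  have hG : ‖G φ‖^2 = ⟪G φ, G φ⟫ := by
    rw [real_inner_self_eq_norm_sq]
  have hD : ‖D φ - G φ‖^2 = ⟪D φ, D φ⟫ - 2*⟪D φ, G φ⟫ + ⟪G φ, G φ⟫ := by
    rw [← real_inner_self_eq_norm_sq, inner_sub_sub_self, real_inner_comm (G φ) (D φ)]; ring
  have hvn : ‖v‖^2 = ‖u‖^2 + 2*τ*⟪u, D φ - G φ⟫ + τ^2*‖D φ - G φ‖^2 := by
    rw [hv, ← real_inner_self_eq_norm_sq, ← real_inner_self_eq_norm_sq,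
      ← real_inner_self_eq_norm_sq, inner_add_add_self, real_inner_smul_left,
      real_inner_smul_right, real_inner_smul_left, real_inner_smul_right,
      real_inner_comm (D φ - G φ) u]
    ring
  have hcomm1 : ⟪D φ, u⟫ = ⟪u, D φ⟫ := real_inner_comm _ _
  have hcomm2 : (⟪G φ, u⟫:ℝ) = ⟪u, G φ⟫ := real_inner_comm _ _
  have hsub : (⟪u, D φ - G φ⟫:ℝ) = ⟪u, D φ⟫ - ⟪u, G φ⟫ := inner_sub_right _ _ _
  have key2 : (⟪u, D φ - G φ⟫:ℝ) = τ * j φ φ - τ * ⟪G φ, G φ⟫ := by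
    rw [hsub, ← hcomm1, ← hcomm2]; linarith [key]
  rw [haellip, hvn, hD, key2, real_inner_comm (G φ) (D φ)]
  nlinarith [mul_pos hτ hτ]
end

section
/- Let τ, δ, μ > 0. Let v ∈ X, and let p', φ, S' ∈ M. Define S = S' + δμ B v, p = p' + φ - δμ B v, ξ' = p' + S', and ξ = p + S (so that ξ - ξ' = φ). Assume the projection step τ a_ellip(φ, q) = -b(v, q) holds for all q ∈ M. Then b(v, p') = -(τ/2) ( a_ellip(ξ, ξ) - a_ellip(ξ', ξ') - a_ellip(φ, φ) ) - (1/(2δμ)) ( ‖S‖² - ‖S'‖² - ‖S - S'‖² ). (Abstract form of the pressure-splitting identity (5.21) of the paper, used in the proofs of Theorem 5.1 and Theorem 6.5.) -/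
open scoped RealInnerProductSpace

/-- Abstract form of the pressure-splitting identity (5.21) of the paper. -/
theorem stmt_5
    {X M : Type*}
    [NormedAddCommGroup X] [InnerProductSpace ℝ X] [FiniteDimensional ℝ X]
    [NormedAddCommGroup M] [InnerProductSpace ℝ M] [FiniteDimensional ℝ M]
    (D G : M →ₗ[ℝ] X) (j : M →ₗ[ℝ] M →ₗ[ℝ] ℝ)
    (hj_symm : ∀ p q : M, j p q = j q p)
    (hj_psd : ∀ q : M, 0 ≤ j q q)
    (b : X → M → ℝ)
    (hb : ∀ (θ : X) (q : M), b θ q = -⟪D q, θ⟫ + ⟪G q, θ⟫)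
    (aellip : M → M → ℝ)
    (haellip : ∀ φ q : M,
      aellip φ q = ⟪D φ, D q⟫ - ⟪D φ, G q⟫ - ⟪G φ, D q⟫ + j φ q)
    (B : X →ₗ[ℝ] M)
    (hB : ∀ (θ : X) (q : M), ⟪B θ, q⟫ = b θ q)
    (τ δ μ : ℝ) (hτ : 0 < τ) (hδ : 0 < δ) (hμ : 0 < μ)
    (v : X) (p' φ S' : M)
    (S p ξ' ξ : M)
    (hS : S = S' + (δ * μ) • B v)
    (hp : p = p' + φ - (δ * μ) • B v)
    (hξ' : ξ' = p' + S')
    (hξ : ξ = p + S)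
    (hproj : ∀ q : M, τ * aellip φ q = -b v q) :
    b v p' = -(τ/2) * (aellip ξ ξ - aellip ξ' ξ' - aellip φ φ)
      - (1/(2*δ*μ)) * (‖S‖^2 - ‖S'‖^2 - ‖S - S'‖^2) := by
  have hδμ : δ * μ ≠ 0 := by positivity
  have hξeq : ξ = ξ' + φ := by
    rw [hξ, hξ', hp, hS]; abel
  have key : aellip (ξ' + φ) (ξ' + φ) = aellip ξ' ξ' + 2 * aellip φ ξ' + aellip φ φ := by
    simp only [haellip, map_add, inner_add_left, inner_add_right, LinearMap.add_apply]
    rw [real_inner_comm (D ξ') (D φ), real_inner_comm (D ξ') (G φ),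
      real_inner_comm (G ξ') (D φ), hj_symm ξ' φ]
    ring
  have hblin : b v ξ' = b v p' + b v S' := by
    rw [hξ', hb, hb, hb]
    simp [inner_add_left]
    ring
  have hSS : S - S' = (δ * μ) • B v := by rw [hS]; abel
  have hnorm : ‖S‖^2 - ‖S'‖^2 - ‖S - S'‖^2 = 2 * (δ * μ) * b v S' := by
    have : ‖S‖^2 = ‖S'‖^2 + 2 * ⟪S', (δ * μ) • B v⟫ + ‖(δ * μ) • B v‖^2 := by
      rw [hS]
      rw [← real_inner_self_eq_norm_sq, ← real_inner_self_eq_norm_sq,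
        ← real_inner_self_eq_norm_sq]
      simp only [inner_add_left, inner_add_right, real_inner_comm S']
      ring
    rw [this, hSS]
    have h2 : ⟪S', (δ * μ) • B v⟫ = (δ * μ) * b v S' := by
      rw [real_inner_smul_right, real_inner_comm, hB]
    rw [h2]; ring
  have hproj' := hproj ξ'
  rw [hξeq, key]
  rw [hnorm]
  have : b v ξ' = -(τ * aellip φ ξ') := by linarith [hproj']
  have hfin : (1/(2*δ*μ)) * (2 * (δ * μ) * b v S') = b v S' := by
    field_simp
  linarith [hblin, this, hfin]
end

section
/- Let τ, δ, μ, κ > 0, let ‖·‖_DG be a norm on X, let N : X × X → ℝ be a bilinear form with N(v, v) ≥ 0 for all v ∈ X (the convection form with both transport arguments frozen at the previous velocity, which satisfies the positivity property of the upwind form a_C), and let a_ε : X × X → ℝ be a bilinear form with a_ε(v, v) ≥ κ ‖v‖²_DG for all v ∈ X. Assume the penalty condition ‖G q‖² ≤ j(q, q) for all q ∈ M, and the divergence bound δ ‖B θ‖² ≤ κ ‖θ‖²_DG for all θ ∈ X (abstract form of the assumptions σ ≥ M²_{k₂}/d and δ ≤ κ/(2d)). Suppose u', f ∈ X, p', S'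 ∈ M are given, and that v, u ∈ X and φ ∈ M satisfy: (i) ⟪v, θ⟫ + τ N(v, θ) + τμ a_ε(v, θ) = ⟪u', θ⟫ + τ b(θ, p') + τ ⟪f, θ⟫ for all θ ∈ X; (ii) τ a_ellip(φ, q) = -b(v, q) for all q ∈ M; (iii) u = v - τ (D φ - G φ). Define S = S' + δμ B v, p = p' + φ - δμ B v, ξ' = p' + S', ξ = p + S. Then (1/2)(‖u‖² - ‖u'‖² + ‖v - u'‖²) + (κμ/2) τ ‖v‖²_DG + (τ²/2)(a_ellip(ξ, ξ) - a_ellip(ξ', ξ')) + (τ/(2δμ))(‖S‖² - ‖S'‖²) ≤ τ ⟪f, v⟫. (Abstract form of the one-step stability inequality (5.26) in the proof of Theorem 5.1.) -/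
open scoped RealInnerProductSpace

/-- Abstract form of the one-step stability inequality (5.26) in the proof of
Theorem 5.1. -/
theorem stmt_6
    {X M : Type*}
    [NormedAddCommGroup X] [InnerProductSpace ℝ X] [FiniteDimensional ℝ X]
    [NormedAddCommGroup M] [InnerProductSpace ℝ M] [FiniteDimensional ℝ M]
    (D G : M →ₗ[ℝ] X) (j : M →ₗ[ℝ] M →ₗ[ℝ] ℝ)
    (hj_symm : ∀ p q : M, j p q = j q p)
    (hj_psd : ∀ q : M, 0 ≤ j q q)
    (b : X → M → ℝ)
    (hb : ∀ (θ : X) (q : M), b θ q = -⟪D q, θ⟫ + ⟪G q, θ⟫)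
    (aellip : M → M → ℝ)
    (haellip : ∀ φ q : M,
      aellip φ q = ⟪D φ, D q⟫ - ⟪D φ, G q⟫ - ⟪G φ, D q⟫ + j φ q)
    (B : X →ₗ[ℝ] M)
    (hB : ∀ (θ : X) (q : M), ⟪B θ, q⟫ = b θ q)
    (τ δ μ κ : ℝ) (hτ : 0 < τ) (hδ : 0 < δ) (hμ : 0 < μ) (hκ : 0 < κ)
    -- the dG norm on X
    (ndg : X → ℝ)
    (hndg_nonneg : ∀ θ : X, 0 ≤ ndg θ)
    (hndg_def : ∀ θ : X, ndg θ = 0 → θ = 0)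
    (hndg_add : ∀ θ₁ θ₂ : X, ndg (θ₁ + θ₂) ≤ ndg θ₁ + ndg θ₂)
    (hndg_smul : ∀ (c : ℝ) (θ : X), ndg (c • θ) = |c| * ndg θ)
    -- the (frozen) convection form and the elliptic form on X
    (N : X →ₗ[ℝ] X →ₗ[ℝ] ℝ)
    (hN : ∀ w : X, 0 ≤ N w w)
    (aε : X →ₗ[ℝ] X →ₗ[ℝ] ℝ)
    (haε : ∀ w : X, κ * (ndg w)^2 ≤ aε w w)
    -- penalty condition and divergence bound
    (hpen : ∀ q : M, ‖G q‖^2 ≤ j q q)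
    (hdiv : ∀ θ : X, δ * ‖B θ‖^2 ≤ κ * (ndg θ)^2)
    -- data and one step of the scheme
    (u' f : X) (p' S' : M)
    (v u : X) (φ : M)
    (hv : ∀ θ : X,
      ⟪v, θ⟫ + τ * N v θ + τ * μ * aε v θ = ⟪u', θ⟫ + τ * b θ p' + τ * ⟪f, θ⟫)
    (hproj : ∀ q : M, τ * aellip φ q = -b v q)
    (hu : u = v - τ • (D φ - G φ))
    (S p ξ' ξ : M)
    (hS : S = S' + (δ * μ) • B v)
    (hp : p = p' + φ - (δ * μ) • B v)
    (hξ' : ξ' = p' + S')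
    (hξ : ξ = p + S) :
    (1/2) * (‖u‖^2 - ‖u'‖^2 + ‖v - u'‖^2) + (κ * μ / 2) * τ * (ndg v)^2
      + (τ^2/2) * (aellip ξ ξ - aellip ξ' ξ')
      + (τ/(2*δ*μ)) * (‖S‖^2 - ‖S'‖^2)
      ≤ τ * ⟪f, v⟫ := by

  -- symmetry of aellip
  have hsymm : ∀ x y : M, aellip x y = aellip y x := by
    intro x y
    rw [haellip, haellip, hj_symm, real_inner_comm (D x) (D y),
      real_inner_comm (D x) (G y), real_inner_comm (G x) (D y)]
    ring
  -- ξ = ξ' + φ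
  have hξφ : ξ = ξ' + φ := by rw [hξ, hp, hS, hξ']; abel
  -- expansion of ‖u‖²
  have hu2 : ‖u‖^2 = ‖v‖^2 - 2*(τ*⟪v, D φ - G φ⟫) + τ^2*‖D φ - G φ‖^2 := by
    rw [hu, norm_sub_sq_real, real_inner_smul_right, norm_smul]
    simp only [Real.norm_eq_abs, mul_pow, sq_abs]
  have hbvφ : ⟪v, D φ - G φ⟫ = -(b v φ) := by
    rw [hb, inner_sub_right, real_inner_comm v (D φ), real_inner_comm v (G φ)]
    ring
  have F1 : ‖u‖^2 = ‖v‖^2 - 2*(τ^2*aellip φ φ) + τ^2*‖D φ - G φ‖^2 := by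
    linear_combination hu2 - 2*τ*hbvφ + 2*τ*(hproj φ)
  -- ‖Dφ - Gφ‖² ≤ aellip φ φ
  have haφ : aellip φ φ = ‖D φ‖^2 - 2*⟪D φ, G φ⟫ + j φ φ := by
    rw [haellip, real_inner_self_eq_norm_sq, real_inner_comm (G φ) (D φ)]
    ring
  have h2 : ‖D φ - G φ‖^2 ≤ aellip φ φ := by
    have hW : ‖D φ - G φ‖^2 = ‖D φ‖^2 - 2*⟪D φ, G φ⟫ + ‖G φ‖^2 :=
      norm_sub_sq_real _ _
    have := hpen φ
    linarith
  have F2 : τ^2*‖D φ - G φ‖^2 ≤ τ^2*aellip φ φ :=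
    mul_le_mul_of_nonneg_left h2 (sq_nonneg τ)
  -- the tested momentum equation
  have F3 : ‖v‖^2 + τ*N v v + τ*μ*aε v v = ⟪u', v⟫ + τ * b v p' + τ*⟪f, v⟫ := by
    have := hv v
    rwa [real_inner_self_eq_norm_sq] at this
  have F3b : ‖v - u'‖^2 = ‖v‖^2 - 2*⟪u', v⟫ + ‖u'‖^2 := by
    rw [norm_sub_sq_real, real_inner_comm]
  -- expansion of aellip ξ ξ
  have F4 : τ^2*aellip ξ ξ
      = τ^2*aellip ξ' ξ' + 2*(τ^2*aellip ξ' φ) + τ^2*aellip φ φ := by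
    have hexp : aellip ξ ξ = aellip ξ' ξ' + aellip ξ' φ + aellip φ ξ' + aellip φ φ := by
      rw [hξφ]
      simp only [haellip, map_add, inner_add_left, inner_add_right,
        LinearMap.add_apply]
      ring
    linear_combination τ^2*hexp + τ^2*hsymm φ ξ'
  -- the projection equation tested with ξ'
  have hbadd : b v ξ' = b v p' + b v S' := by
    rw [hξ']
    simp only [hb, map_add, inner_add_left]
    ring
  have F5 : τ^2*aellip ξ' φ = -(τ*b v p') - τ*(b v S') := by
    linear_combination τ*(hproj ξ') + τ^2*hsymm ξ' φ - τ*hbadd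
  -- the S update
  have hSnorm : ‖S‖^2 = ‖S'‖^2 + 2*((δ*μ)*(b v S')) + (δ*μ)^2*‖B v‖^2 := by
    rw [hS, norm_add_sq_real, real_inner_smul_right, norm_smul,
      show (inner ℝ S' (B v) : ℝ) = b v S' from by rw [← hB, real_inner_comm]]
    simp only [Real.norm_eq_abs, mul_pow, sq_abs]
  have F6 : (τ/(2*δ*μ))*(‖S‖^2 - ‖S'‖^2) = τ*(b v S') + (τ*δ*μ/2)*‖B v‖^2 := by
    rw [hSnorm]
    field_simp
    ring
  -- coercivity and divergence bounds
  have F7 : τ*μ*(κ*(ndg v)^2) ≤ τ*μ*(aε v v) :=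
    mul_le_mul_of_nonneg_left (haε v) (by positivity)
  have F8 : (τ*μ/2)*(δ*‖B v‖^2) ≤ (τ*μ/2)*(κ*(ndg v)^2) :=
    mul_le_mul_of_nonneg_left (hdiv v) (by positivity)
  have F9 : 0 ≤ τ * N v v := mul_nonneg hτ.le (hN v)
  linarith [F1, F2, F3, F3b, F4, F5, F6, F7, F8, F9]
end

section
/- Let τ, δ, μ, κ > 0. Let ‖·‖_DG be a norm on X, let N : X × X → ℝ be a bilinear form with N(v, v) ≥ 0 for all v ∈ X (positivity of the convection form with frozen transport argument), and let a_ε : X × X → ℝ be a bilinear form with a_ε(v, v) ≥ κ ‖v‖²_DG for all v ∈ X. Let M₀ ⊆ M be a linear subspace and let |·|_DG be a seminorm on M that is a norm on M₀, with a_ellip(q, q) ≥ (1/2) |q|²_DG for all q ∈ M. Then for any given u' ∈ X, p' ∈ M, and f ∈ X: (a) there exists a unique v ∈ X with ⟪v, θ⟫ + τ N(v, θ) + τμ a_ε(v, θ) = ⟪u', θ⟫ + τ b(θ, p') + τ ⟪f, θ⟫ for all θ ∈ X; (b) there exists a unique φ ∈ M₀ with a_ellip(φ, q) = -(1/τ)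 b(v, q) for all q ∈ M₀; and (c) the updates p = p' + φ - δμ B v ∈ M and u = v - τ (D φ - G φ) ∈ X are uniquely determined; hence one step of the dG pressure correction scheme has a unique solution (v, φ, p, u). (Abstract form of the existence and uniqueness lemma in Section 4 of the paper.) -/
open scoped RealInnerProductSpace

open Module

private lemma exu_aux {E : Type*} [AddCommGroup E] [Module ℝ E] [FiniteDimensional ℝ E]
    (A : E →ₗ[ℝ] E →ₗ[ℝ] ℝ) (hA : ∀ v : E, A v v = 0 → v = 0)
    (ℓ : E →ₗ[ℝ] ℝ) : ∃! v : E, ∀ θ : E, A v θ = ℓ θ := by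
  have hinj : Function.Injective A := by
    rw [← LinearMap.ker_eq_bot, LinearMap.ker_eq_bot']
    intro v hv
    exact hA v (by rw [hv]; rfl)
  have hsurj : Function.Surjective A :=
    (LinearMap.injective_iff_surjective_of_finrank_eq_finrank
      (Subspace.dual_finrank_eq (K := ℝ) (V := E)).symm).mp hinj
  obtain ⟨v, hv⟩ := hsurj ℓ
  refine ⟨v, fun θ => by rw [hv], fun w hw => hinj ?_⟩
  rw [hv]; ext θ; exact hw θ

set_option maxHeartbeats 2000000 in
/-- Abstract form of the existence and uniqueness lemma in Section 4: one step
of the dG pressure correction scheme has a unique solution `(v, φ, p, u)`. -/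
theorem stmt_8
    {X M : Type*}
    [NormedAddCommGroup X] [InnerProductSpace ℝ X] [FiniteDimensional ℝ X]
    [NormedAddCommGroup M] [InnerProductSpace ℝ M] [FiniteDimensional ℝ M]
    (D G : M →ₗ[ℝ] X) (j : M →ₗ[ℝ] M →ₗ[ℝ] ℝ)
    (hj_symm : ∀ p q : M, j p q = j q p)
    (hj_psd : ∀ q : M, 0 ≤ j q q)
    (b : X → M → ℝ)
    (hb : ∀ (θ : X) (q : M), b θ q = -⟪D q, θ⟫ + ⟪G q, θ⟫)
    (aellip : M → M → ℝ)
    (haellip : ∀ φ q : M,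
      aellip φ q = ⟪D φ, D q⟫ - ⟪D φ, G q⟫ - ⟪G φ, D q⟫ + j φ q)
    (B : X →ₗ[ℝ] M)
    (hB : ∀ (θ : X) (q : M), ⟪B θ, q⟫ = b θ q)
    (τ δ μ κ : ℝ) (hτ : 0 < τ) (hδ : 0 < δ) (hμ : 0 < μ) (hκ : 0 < κ)
    -- the dG norm on X
    (ndg : X → ℝ)
    (hndg_nonneg : ∀ θ : X, 0 ≤ ndg θ)
    (hndg_def : ∀ θ : X, ndg θ = 0 → θ = 0)
    (hndg_add : ∀ θ₁ θ₂ : X, ndg (θ₁ + θ₂) ≤ ndg θ₁ + ndg θ₂)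
    (hndg_smul : ∀ (c : ℝ) (θ : X), ndg (c • θ) = |c| * ndg θ)
    -- the convection form and the elliptic form on X
    (N : X →ₗ[ℝ] X →ₗ[ℝ] ℝ)
    (hN : ∀ w : X, 0 ≤ N w w)
    (aε : X →ₗ[ℝ] X →ₗ[ℝ] ℝ)
    (haε : ∀ w : X, κ * (ndg w)^2 ≤ aε w w)
    -- the mean-zero subspace and the dG seminorm on M, a norm on M₀
    (M₀ : Submodule ℝ M)
    (mdg : M → ℝ)
    (hmdg_nonneg : ∀ q : M, 0 ≤ mdg q)
    (hmdg_add : ∀ q₁ q₂ : M, mdg (q₁ + q₂) ≤ mdg q₁ + mdg q₂)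
    (hmdg_smul : ∀ (c : ℝ) (q : M), mdg (c • q) = |c| * mdg q)
    (hmdg_norm : ∀ q ∈ M₀, mdg q = 0 → q = 0)
    (haellip_coer : ∀ q : M, (1/2) * (mdg q)^2 ≤ aellip q q)
    -- data
    (u' : X) (p' : M) (f : X) :
    -- (a) unique intermediate velocity
    (∃! v : X, ∀ θ : X,
      ⟪v, θ⟫ + τ * N v θ + τ * μ * aε v θ
        = ⟪u', θ⟫ + τ * b θ p' + τ * ⟪f, θ⟫) ∧
    -- (b) unique potential in M₀
    (∀ v : X,
      (∀ θ : X, ⟪v, θ⟫ + τ * N v θ + τ * μ * aε v θ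
        = ⟪u', θ⟫ + τ * b θ p' + τ * ⟪f, θ⟫) →
      ∃! φ : M, φ ∈ M₀ ∧ ∀ q ∈ M₀, aellip φ q = -(1/τ) * b v q) ∧
    -- (c) the whole step has a unique solution (v, φ, p, u)
    (∃! s : X × M × M × X,
      (∀ θ : X, ⟪s.1, θ⟫ + τ * N s.1 θ + τ * μ * aε s.1 θ
        = ⟪u', θ⟫ + τ * b θ p' + τ * ⟪f, θ⟫) ∧
      s.2.1 ∈ M₀ ∧
      (∀ q ∈ M₀, aellip s.2.1 q = -(1/τ) * b s.1 q) ∧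
      s.2.2.1 = p' + s.2.1 - (δ * μ) • B s.1 ∧
      s.2.2.2 = s.1 - τ • (D s.2.1 - G s.2.1)) := by
  classical
  -- the bilinear form of step (a)
  set A : X →ₗ[ℝ] X →ₗ[ℝ] ℝ := innerₗ X + τ • (N : X →ₗ[ℝ] X →ₗ[ℝ] ℝ) + (τ * μ) • aε with hA_def
  have hAapp : ∀ v θ : X, A v θ = ⟪v, θ⟫ + τ * N v θ + τ * μ * aε v θ := by
    intro v θ
    simp [hA_def, mul_assoc]
  have hApos : ∀ v : X, A v v = 0 → v = 0 := by
    intro v hv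
    rw [hAapp] at hv
    have h1 : 0 ≤ N v v := hN v
    have h2 : 0 ≤ aε v v := le_trans (by positivity) (haε v)
    have h3 : ⟪v, v⟫ ≤ 0 := by nlinarith [mul_nonneg hτ.le h1, mul_nonneg (mul_nonneg hτ.le hμ.le) h2]
    exact real_inner_self_nonpos.mp h3
  -- the linear functional of step (a)
  set ℓ : X →ₗ[ℝ] ℝ := (innerₗ X) (u' + τ • (G p' - D p') + τ • f) with hℓ_def
  have hℓapp : ∀ θ : X, ℓ θ = ⟪u', θ⟫ + τ * b θ p' + τ * ⟪f, θ⟫ := by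
    intro θ
    simp only [hℓ_def, innerₗ_apply_apply, hb, inner_add_left, inner_sub_left,
      real_inner_smul_left]
    ring
  have key_a : ∀ v : X,
      (∀ θ : X, A v θ = ℓ θ) ↔
      (∀ θ : X, ⟪v, θ⟫ + τ * N v θ + τ * μ * aε v θ
        = ⟪u', θ⟫ + τ * b θ p' + τ * ⟪f, θ⟫) := by
    intro v
    constructor <;> intro h θ
    · rw [← hAapp, ← hℓapp]; exact h θ
    · rw [hAapp, hℓapp]; exact h θ
  obtain ⟨v, hv, hv_uniq⟩ := exu_aux A hApos ℓ
  have part_a : ∃! v : X, ∀ θ : X,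
      ⟪v, θ⟫ + τ * N v θ + τ * μ * aε v θ
        = ⟪u', θ⟫ + τ * b θ p' + τ * ⟪f, θ⟫ :=
    ⟨v, (key_a v).mp hv, fun w hw => hv_uniq w ((key_a w).mpr hw)⟩
  -- the bilinear form of step (b)
  set Ae : M →ₗ[ℝ] M →ₗ[ℝ] ℝ :=
    (innerₗ X).compl₁₂ D D - (innerₗ X).compl₁₂ D G - (innerₗ X).compl₁₂ G D + j with hAe_def
  have hAeapp : ∀ φ q : M, Ae φ q = aellip φ q := by
    intro φ q
    rw [haellip]
    simp only [hAe_def, LinearMap.add_apply, LinearMap.sub_apply,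
      LinearMap.compl₁₂_apply, innerₗ_apply_apply]
  set A₀ : M₀ →ₗ[ℝ] M₀ →ₗ[ℝ] ℝ := (Ae.domRestrict M₀).compl₂ M₀.subtype with hA₀_def
  have hA₀app : ∀ φ q : M₀, A₀ φ q = aellip (φ : M) (q : M) := by
    intro φ q
    simp only [hA₀_def, LinearMap.compl₂_apply, LinearMap.domRestrict_apply,
      Submodule.coe_subtype, hAeapp]
  have hA₀pos : ∀ q : M₀, A₀ q q = 0 → q = 0 := by
    intro q hq
    rw [hA₀app] at hq
    have h1 := haellip_coer (q : M)
    have h2 := hmdg_nonneg (q : M)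
    have h3 : mdg (q : M) = 0 := by nlinarith
    exact Subtype.ext (hmdg_norm _ q.2 h3)
  -- step (b) for an arbitrary velocity w
  have part_b : ∀ w : X, ∃! φ : M, φ ∈ M₀ ∧ ∀ q ∈ M₀, aellip φ q = -(1/τ) * b w q := by
    intro w
    set ℓw : M₀ →ₗ[ℝ] ℝ :=
      ((-(1/τ)) • (((innerₗ X).flip w) ∘ₗ (G - D))).domRestrict M₀ with hℓw_def
    have hℓwapp : ∀ q : M₀, ℓw q = -(1/τ) * b w (q : M) := by
      intro q
      simp only [hℓw_def, LinearMap.domRestrict_apply, LinearMap.smul_apply,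
        LinearMap.coe_comp, Function.comp_apply, LinearMap.sub_apply,
        LinearMap.flip_apply, innerₗ_apply_apply, inner_sub_left, smul_eq_mul, hb]
      ring
    obtain ⟨φ₀, hφ₀, hφ₀_uniq⟩ := exu_aux A₀ hA₀pos ℓw
    refine ⟨(φ₀ : M), ⟨φ₀.2, fun q hq => ?_⟩, ?_⟩
    · have := hφ₀ ⟨q, hq⟩
      rw [hA₀app, hℓwapp] at this
      exact this
    · rintro ψ ⟨hψmem, hψ⟩
      have : (⟨ψ, hψmem⟩ : M₀) = φ₀ := by
        apply hφ₀_uniq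
        intro q
        rw [hA₀app, hℓwapp]
        exact hψ (q : M) q.2
      exact congrArg Subtype.val this
  refine ⟨part_a, fun w _ => part_b w, ?_⟩
  -- step (c)
  obtain ⟨φ, ⟨hφmem, hφeq⟩, hφ_uniq⟩ := part_b v
  refine ⟨(v, φ, p' + φ - (δ * μ) • B v, v - τ • (D φ - G φ)),
    ⟨(key_a v).mp hv, hφmem, hφeq, rfl, rfl⟩, ?_⟩
  rintro ⟨v', φ', p'', u''⟩ ⟨h1, h2, h3, h4, h5⟩
  have hv' : v' = v := hv_uniq v' ((key_a v').mpr h1)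
  subst hv'
  have hφ' : φ' = φ := hφ_uniq φ' ⟨h2, h3⟩
  subst hφ'
  simp only [Prod.mk.injEq]
  exact ⟨trivial, trivial, h4, h5⟩
end

section
/- Let τ > 0 and N ∈ ℕ. Let e⁰ ∈ X be given, set φ⁰ = 0 ∈ M, and suppose that for n = 1, …, N the elements e^n, ẽ^n ∈ X and φ^n ∈ M satisfy: (i) e^n = ẽ^n - τ (D φ^n - G φ^n); (ii) b(e^n, q) = -τ j(φ^n, q) + τ ⟪G φ^n, G q⟫ for all q ∈ M. Then for every 1 ≤ n ≤ N: ‖ẽ^n - e^{n-1}‖² = ‖e^n - e^{n-1}‖² + τ² (‖D φ^n‖² + ‖G φ^n‖²) + τ² (A₁^n - A₂^n) + τ² ( j(φ^n - φ^{n-1}, φ^n - φ^{n-1}) - ‖G(φ^n - φ^{n-1})‖² ) - 2 τ² ⟪D φ^n, G φ^n⟫ + 2 δ_{n,1} τ b(e⁰, φ¹), where δ_{n,1} is the Kronecker delta, A₁^n = j(φ^n, φ^n) - j(φ^{n-1}, φ^{n-1}), and A₂^n = ‖G φ^n‖² - ‖G φ^{n-1}‖². (Abstract form of the error-difference identity (6.17)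 of Lemma 6.1 of the paper.) -/
open scoped RealInnerProductSpace

/-- Abstract form of the error-difference identity (6.17) of Lemma 6.1. -/
theorem stmt_10
    {X M : Type*}
    [NormedAddCommGroup X] [InnerProductSpace ℝ X] [FiniteDimensional ℝ X]
    [NormedAddCommGroup M] [InnerProductSpace ℝ M] [FiniteDimensional ℝ M]
    (D G : M →ₗ[ℝ] X) (j : M →ₗ[ℝ] M →ₗ[ℝ] ℝ)
    (hj_symm : ∀ p q : M, j p q = j q p)
    (hj_psd : ∀ q : M, 0 ≤ j q q)
    (b : X → M → ℝ)
    (hb : ∀ (θ : X) (q : M), b θ q = -⟪D q, θ⟫ + ⟪G q, θ⟫)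
    (τ : ℝ) (hτ : 0 < τ) (Nmax : ℕ)
    (e et : ℕ → X) (φ : ℕ → M)
    (hφ0 : φ 0 = 0)
    (he : ∀ n : ℕ, 1 ≤ n → n ≤ Nmax →
      e n = et n - τ • (D (φ n) - G (φ n)))
    (hbe : ∀ n : ℕ, 1 ≤ n → n ≤ Nmax → ∀ q : M,
      b (e n) q = -τ * j (φ n) q + τ * ⟪G (φ n), G q⟫) :
    ∀ n : ℕ, 1 ≤ n → n ≤ Nmax →
      ‖et n - e (n-1)‖^2
        = ‖e n - e (n-1)‖^2
          + τ^2 * (‖D (φ n)‖^2 + ‖G (φ n)‖^2)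
          + τ^2 * ((j (φ n) (φ n) - j (φ (n-1)) (φ (n-1)))
              - (‖G (φ n)‖^2 - ‖G (φ (n-1))‖^2))
          + τ^2 * (j (φ n - φ (n-1)) (φ n - φ (n-1))
              - ‖G (φ n - φ (n-1))‖^2)
          - 2 * τ^2 * ⟪D (φ n), G (φ n)⟫
          + 2 * (if n = 1 then (1:ℝ) else 0) * τ * b (e 0) (φ 1) := by
  intro n hn hNn
  have hjs : j (φ n) (φ (n-1)) = j (φ (n-1)) (φ n) := hj_symm _ _
  have hGG : ⟪G (φ n), G (φ n)⟫ = ‖G (φ n)‖^2 := real_inner_self_eq_norm_sq _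
  have het : et n - e (n-1) = (e n - e (n-1)) + τ • (D (φ n) - G (φ n)) := by
    rw [he n hn hNn]; abel
  have hexp : ‖et n - e (n-1)‖^2
      = ‖e n - e (n-1)‖^2 + 2*(τ * ⟪e n - e (n-1), D (φ n) - G (φ n)⟫)
        + τ^2 * ‖D (φ n) - G (φ n)‖^2 := by
    rw [het, norm_add_sq_real, real_inner_smul_right, norm_smul, mul_pow,
      Real.norm_eq_abs, sq_abs]
  have hw : ‖D (φ n) - G (φ n)‖^2
      = ‖D (φ n)‖^2 - 2*⟪D (φ n), G (φ n)⟫ + ‖G (φ n)‖^2 := norm_sub_sq_real _ _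
  have hin : ⟪e n - e (n-1), D (φ n) - G (φ n)⟫
      = - b (e n) (φ n) + b (e (n-1)) (φ n) := by
    rw [hb, hb]
    simp only [inner_sub_left, inner_sub_right]
    rw [real_inner_comm (e n) (D (φ n)), real_inner_comm (e n) (G (φ n)),
      real_inner_comm (e (n-1)) (D (φ n)), real_inner_comm (e (n-1)) (G (φ n))]
    ring
  have hGφ : ‖G (φ n - φ (n-1))‖^2
      = ‖G (φ n)‖^2 - 2*⟪G (φ (n-1)), G (φ n)⟫ + ‖G (φ (n-1))‖^2 := by
    rw [map_sub, norm_sub_sq_real, real_inner_comm]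
  have hjφ : j (φ n - φ (n-1)) (φ n - φ (n-1))
      = j (φ n) (φ n) - 2 * j (φ (n-1)) (φ n) + j (φ (n-1)) (φ (n-1)) := by
    simp only [map_sub, LinearMap.sub_apply]
    rw [hjs]; ring
  have hbn := hbe n hn hNn (φ n)
  rcases eq_or_lt_of_le hn with h1 | h2
  · -- n = 1
    subst h1
    rw [hexp, hw, hin, hbn, hjφ, hGφ, hGG, if_pos rfl]
    simp only [Nat.sub_self, hφ0, map_zero, LinearMap.zero_apply, norm_zero,
      inner_zero_left]
    ring
  · -- n ≥ 2
    have hn1 : 1 ≤ n - 1 := Nat.le_sub_one_of_lt h2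
    have hN1 : n - 1 ≤ Nmax := le_trans (Nat.sub_le n 1) hNn
    have hbn1 := hbe (n-1) hn1 hN1 (φ n)
    have hne : n ≠ 1 := Nat.ne_of_gt h2
    rw [hexp, hw, hin, hbn, hbn1, hjφ, hGφ, hGG, if_neg hne]
    ring
end
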